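/- arXiv:math/9803079 — 4 statements merged into one kernel-verified Lean document; each statement's English description precedes it below -/
import Mathlib

section
/- Let T be a representation of a Lie algebra L on a finite-dimensional space E with ordered basis such that all T(l) are strictly lower triangular, and let x ∈ E, l ∈ L be such that (exp(T(tl))x)_j = x_j for all j < k and all t ∈ f, and (exp(T(l))x)_k = x_k + c with c ≠ 0. Then (exp(T(tl))x)_k = x_k + ct for all t ∈ f; in particular, taking t = -x_k/c makes the k-th coordinate zero. -/
attribute [local instance 100] LieRing.ofAssociativeRing

/-!
Since `T (t • l) = t • T l`, every coordinate of the truncated exponential `exp(T(tl))x` is a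
polynomial in `t` whose `m`-th coefficient is `(T(l)^m x)_j / m!`. Over an infinite field the
hypothesis on the coordinates `j < k` forces `(T(l)^m x)_j = 0` for all `m ≥ 1`. Strict lower
triangularity then kills the `k`-th coordinate of `T(l)^m x` for `m ≥ 2`, so the `k`-th coordinate
of `exp(T(tl))x` is affine in `t`, and its slope is `c` by the value at `t = 1`.
-/

open Finset Polynomial

theorem coeff_eq_zero_of_forall_sum_range_pow_mul_eq {R : Type*} [CommRing R] [IsDomain R]
    [Infinite R] {n : ℕ} {b : ℕ → R} (h : ∀ t : R, ∑ m ∈ range n, t ^ m * b m = b 0)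
    {m : ℕ} (hm : 1 ≤ m) (hmn : m < n) : b m = 0 := by
  have hp : ∑ i ∈ range n, monomial i (b i) = C (b 0) :=
    Polynomial.funext fun t => by simp [eval_finsetSum, eval_monomial, ← h t, mul_comm]
  have := congr_arg (coeff · m) hp
  simpa [finsetSum_coeff, coeff_monomial, hmn, coeff_C, Nat.one_le_iff_ne_zero.mp hm] using this

theorem sum_range_pow_mul_eq_affine {R : Type*} [CommRing R] {n : ℕ} (hn : 0 < n) {b : ℕ → R}
    (hb : ∀ m, 2 ≤ m → m < n → b m = 0) (t : R) :
    ∑ m ∈ range n, t ^ m * b m = b 0 + t * (∑ m ∈ range n, b m - b 0) := by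
  rcases Nat.lt_or_ge n 2 with hn2 | hn2
  · obtain rfl : n = 1 := by omega
    simp
  have hIco : ∀ g : ℕ → R, (∀ m, b m = 0 → g m = 0) → ∑ m ∈ Ico 2 n, g m = 0 := fun g hg =>
    sum_eq_zero fun m hm => hg m (hb m (mem_Ico.mp hm).1 (mem_Ico.mp hm).2)
  rw [← sum_range_add_sum_Ico _ hn2, ← sum_range_add_sum_Ico _ hn2,
    hIco _ fun m hm => by rw [hm, mul_zero], hIco _ fun m hm => hm]
  simp [sum_range_succ]

section Basis

variable {ι R M : Type*} [CommRing R] [AddCommGroup M] [Module R M]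

theorem Module.Basis.repr_sum_smul_pow_smul_apply (B : Module.Basis ι R M) (s : Finset ℕ)
    (a : ℕ → R) (A : Module.End R M) (t : R) (x : M) (j : ι) :
    B.repr ((∑ m ∈ s, a m • (t • A) ^ m) x) j = ∑ m ∈ s, t ^ m * (a m * B.repr ((A ^ m) x) j) := by
  simp only [LinearMap.sum_apply, map_sum, Finsupp.finsetSum_apply, _root_.smul_pow,
    LinearMap.smul_apply, map_smul, Finsupp.smul_apply, smul_eq_mul]
  exact sum_congr rfl fun m _ => by ring

theorem Module.Basis.repr_apply_eq_zero_of_strictLowerTriangular [Fintype ι] [LinearOrder ι]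
    (B : Module.Basis ι R M) {A : Module.End R M}
    (hA : ∀ i j, j ≤ i → B.repr (A (B i)) j = 0) {v : M} {k : ι}
    (hv : ∀ j < k, B.repr v j = 0) : B.repr (A v) k = 0 := by
  rw [← B.sum_repr v, map_sum, map_sum, Finsupp.finsetSum_apply]
  refine sum_eq_zero fun j _ => ?_
  rw [map_smul, map_smul, Finsupp.smul_apply, smul_eq_mul]
  rcases lt_or_ge j k with hjk | hjk
  · rw [hv j hjk, zero_mul]
  · rw [hA j k hjk, mul_zero]

end Basis

/-- Lemma 2 of the paper: if `exp(T(tl))x` fixes all coordinates below `k` for every `t`,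
and `(exp(T(l))x)_k = x_k + c` with `c ≠ 0`, then `(exp(T(tl))x)_k = x_k + c t` for all
`t`; in particular at `t = -x_k/c` the `k`-th coordinate vanishes. -/
theorem stmt8 (f : Type*) [Field f] [CharZero f] (L E : Type*) [LieRing L] [LieAlgebra f L]
    [AddCommGroup E] [Module f E] (n : ℕ) (B : Module.Basis (Fin n) f E)
    (T : L →ₗ⁅f⁆ Module.End f E)
    (hT : ∀ l : L, ∀ i j : Fin n, j ≤ i → B.repr (T l (B i)) j = 0)
    (l : L) (k : Fin n) (x : E) (c : f) (hc : c ≠ 0)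
    (h1 : ∀ t : f, ∀ j < k,
      B.repr ((∑ m ∈ Finset.range n, ((m.factorial : f)⁻¹) • (T (t • l)) ^ m) x) j
        = B.repr x j)
    (h2 : B.repr ((∑ m ∈ Finset.range n, ((m.factorial : f)⁻¹) • (T l) ^ m) x) k
        = B.repr x k + c) :
    (∀ t : f,
      B.repr ((∑ m ∈ Finset.range n, ((m.factorial : f)⁻¹) • (T (t • l)) ^ m) x) k
        = B.repr x k + c * t) ∧
    B.repr ((∑ m ∈ Finset.range n,
        ((m.factorial : f)⁻¹) • (T ((-(B.repr x k / c)) • l)) ^ m) x) k = 0 := by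
  have hcoord : ∀ (t : f) (j : Fin n),
      B.repr ((∑ m ∈ range n, ((m.factorial : f)⁻¹) • (T (t • l)) ^ m) x) j
        = ∑ m ∈ range n, t ^ m * ((m.factorial : f)⁻¹ * B.repr ((T l ^ m) x) j) := by
    intro t j
    rw [show T (t • l) = t • T l from T.map_smul t l]
    exact B.repr_sum_smul_pow_smul_apply _ _ _ _ _ _
  have hlow : ∀ j < k, ∀ m, 1 ≤ m → m < n → B.repr ((T l ^ m) x) j = 0 := by
    intro j hj m hm hmn
    have := coeff_eq_zero_of_forall_sum_range_pow_mul_eq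
      (fun t => by rw [← hcoord, h1 t j hj]; simp) hm hmn
    simpa [Nat.factorial_ne_zero] using this
  have hhigh : ∀ m, 2 ≤ m → m < n → B.repr ((T l ^ m) x) k = 0 := by
    intro m hm hmn
    obtain ⟨m, rfl⟩ : ∃ m', m = m' + 1 := ⟨m - 1, by omega⟩
    rw [pow_succ', Module.End.mul_apply]
    exact B.repr_apply_eq_zero_of_strictLowerTriangular (hT l)
      fun j hj => hlow j hj m (by omega) (by omega)
  have hslope := hcoord 1 k
  simp only [one_smul, h2, one_pow, one_mul] at hslope
  have hk : ∀ t : f, B.repr ((∑ m ∈ range n, ((m.factorial : f)⁻¹) • (T (t • l)) ^ m) x) k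
      = B.repr x k + c * t := by
    intro t
    rw [hcoord, sum_range_pow_mul_eq_affine k.pos fun m hm hmn => by rw [hhigh m hm hmn, mul_zero]]
    simp [← hslope, mul_comm]
  refine ⟨hk, ?_⟩
  rw [hk]
  field_simp
  ring
end

section
/- Define a relation ⪯ on f^n by: x ⪯ y iff for every index j with x_j ≠ 0 and y_j = 0, there exists i ≤ j with x_i = 0 and y_i ≠ 0. Then ⪯ is reflexive and transitive (a preorder) on f^n. -/
/-- The relation `x ⪯ y` iff for every `j` with `x_j ≠ 0` and `y_j = 0` there is `i ≤ j`
with `x_i = 0` and `y_i ≠ 0`, is reflexive and transitive on `f^n`. -/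
theorem stmt9 (f : Type*) [Field f] (n : ℕ) (hn : 0 < n) :
    (∀ x : Fin n → f, ∀ j, x j ≠ 0 → x j = 0 → ∃ i ≤ j, x i = 0 ∧ x i ≠ 0) ∧
    (∀ x y z : Fin n → f,
      (∀ j, x j ≠ 0 → y j = 0 → ∃ i ≤ j, x i = 0 ∧ y i ≠ 0) →
      (∀ j, y j ≠ 0 → z j = 0 → ∃ i ≤ j, y i = 0 ∧ z i ≠ 0) →
      (∀ j, x j ≠ 0 → z j = 0 → ∃ i ≤ j, x i = 0 ∧ z i ≠ 0)) := by
  constructor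
  · intro x j h1 h2; exact absurd h2 h1
  · intro x y z hxy hyz
    have key : ∀ j : Fin n,
        ((x j ≠ 0 ∧ y j = 0) ∨ (y j ≠ 0 ∧ z j = 0)) →
        ∃ i ≤ j, x i = 0 ∧ z i ≠ 0 := by
      have main : ∀ m : ℕ, ∀ j : Fin n, (j : ℕ) ≤ m →
          ((x j ≠ 0 ∧ y j = 0) ∨ (y j ≠ 0 ∧ z j = 0)) →
          ∃ i ≤ j, x i = 0 ∧ z i ≠ 0 := by
        intro m
        induction m with
        | zero =>
          intro j hj h
          have ih : ∀ i : Fin n, i < j → False := fun i hi =>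
            Nat.not_lt_zero _ (lt_of_lt_of_le hi hj)
          rcases h with ⟨hx, hy⟩ | ⟨hy, hz⟩
          · obtain ⟨i, hij, hxi, hyi⟩ := hxy j hx hy
            by_cases hzi : z i = 0
            · exact absurd (lt_of_le_of_ne hij (by rintro rfl; exact hx hxi)) (fun h => ih i h)
            · exact ⟨i, hij, hxi, hzi⟩
          · obtain ⟨i, hij, hyi, hzi⟩ := hyz j hy hz
            by_cases hxi : x i = 0
            · exact ⟨i, hij, hxi, hzi⟩
            · exact absurd (lt_of_le_of_ne hij (by rintro rfl; exact hy hyi)) (fun h => ih i h)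
        | succ m ihm =>
          intro j hj h
          rcases h with ⟨hx, hy⟩ | ⟨hy, hz⟩
          · obtain ⟨i, hij, hxi, hyi⟩ := hxy j hx hy
            by_cases hzi : z i = 0
            · have hlt : i < j := lt_of_le_of_ne hij (by rintro rfl; exact hx hxi)
              obtain ⟨k, hk, hh⟩ := ihm i (by omega) (Or.inr ⟨hyi, hzi⟩)
              exact ⟨k, hk.trans hij, hh⟩
            · exact ⟨i, hij, hxi, hzi⟩
          · obtain ⟨i, hij, hyi, hzi⟩ := hyz j hy hz
            by_cases hxi : x i = 0
            · exact ⟨i, hij, hxi, hzi⟩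
            · have hlt : i < j := lt_of_le_of_ne hij (by rintro rfl; exact hy hyi)
              obtain ⟨k, hk, hh⟩ := ihm i (by omega) (Or.inl ⟨hxi, hyi⟩)
              exact ⟨k, hk.trans hij, hh⟩
      exact fun j => main j j le_rfl
    intro j hx hz
    by_cases hy : y j = 0
    · exact key j (Or.inl ⟨hx, hy⟩)
    · exact key j (Or.inr ⟨hy, hz⟩)
end

section
/- Let T be a strictly triangular representation of a Lie algebra L on a finite-dimensional space E over a field of characteristic 0, with fixed ordered basis, and let Γ be the group generated by {exp(T(l)) : l ∈ L}. Then every Γ-orbit in E contains a point x that is minimal with respect to the preorder ⪯: for every y in the orbit of x with y ≠ x, x ⪯ y and not y ⪯ x. -/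
/-!
Every element of the monoid `Γ` generated by the `exp (T l)` is unipotent lower triangular, and
`Γ` is a group. Take `x` in the orbit whose zero pattern is lexicographically least, zeros
counting as small. If `y ≠ x` lies in the orbit and `j` is the first coordinate where they differ,
some `g ∈ Γ` maps `x` to `y` and fixes the coordinates of `x` before `j`. On the subgroup `H` of
all such elements of `Γ`, `χ g = (g x)_j - x_j` is additive, and its image is `0` or all of `f`.
Indeed every element of `H` lies in a polynomial family in `H` through `1` (induction on `j`).
If `χ` is a nonzero polynomial `ψ` along a one-parameter family `V`, then along
`V (t + 1) V (1)⁻¹ V (t)⁻¹` it is `ψ (t + 1) - ψ 1 - ψ t`, which has lower degree and, in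
characteristic `0`, is nonzero unless `ψ` is linear. So if `x_j ≠ 0`, some `h ∈ H` has
`(h x)_j = 0`, contradicting minimality; hence `x_j = 0 ≠ y_j`, which says `x ≺ y`.
-/

open Finset Module

namespace TriangularOrbit

section TruncExp

variable (f : Type*) {A : Type*} [Field f] [Ring A] [Algebra f A]

noncomputable def truncExp (n : ℕ) (N : A) : A :=
  ∑ m ∈ range n, ((m.factorial : f)⁻¹) • N ^ m

variable {f} {n : ℕ} {N : A}

theorem truncExp_eq_exp [CharZero f] [Module ℚ A] [IsScalarTower ℚ f A] (hN : N ^ n = 0) :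
    truncExp f n N = IsNilpotent.exp N := by
  rw [IsNilpotent.exp_eq_sum hN]
  refine sum_congr rfl fun m _ => ?_
  rw [← algebraMap_smul f ((m.factorial : ℚ)⁻¹), map_inv₀, map_natCast]

theorem truncExp_add_smul [CharZero f] (hN : N ^ n = 0) (a b : f) :
    truncExp f n ((a + b) • N) = truncExp f n (a • N) * truncExp f n (b • N) := by
  -- `A` need not carry a `ℚ`-module structure; borrow the one coming from `f`.
  let _ : Module ℚ A := Module.compHom A (algebraMap ℚ f)
  have _ : IsScalarTower ℚ f A := ⟨fun q c M => by
    change (q • c) • M = algebraMap ℚ f q • c • M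
    rw [Algebra.smul_def q c, mul_smul]⟩
  have hpow : ∀ c : f, (c • N) ^ n = 0 := fun c => by rw [smul_pow, hN, smul_zero]
  rw [truncExp_eq_exp (hpow _), truncExp_eq_exp (hpow _), truncExp_eq_exp (hpow _), add_smul,
    IsNilpotent.exp_add_of_commute (((Commute.refl N).smul_left a).smul_right b)
      ⟨n, hpow a⟩ ⟨n, hpow b⟩]

theorem truncExp_zero_smul (hN : N ^ n = 0) : truncExp f n ((0 : f) • N) = 1 := by
  cases n with
  | zero => simpa [truncExp] using hN.symm
  | succ k => simp [truncExp, sum_range_succ']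

theorem truncExp_smul_mul_neg_smul [CharZero f] (hN : N ^ n = 0) (a : f) :
    truncExp f n (a • N) * truncExp f n (-a • N) = 1 := by
  rw [← truncExp_add_smul hN, add_neg_cancel, truncExp_zero_smul hN]

theorem truncExp_neg_smul_mul_smul [CharZero f] (hN : N ^ n = 0) (a : f) :
    truncExp f n (-a • N) * truncExp f n (a • N) = 1 := by
  rw [← truncExp_add_smul hN, neg_add_cancel, truncExp_zero_smul hN]

end TruncExp

section Flag

variable {f E : Type*} [Field f] [AddCommGroup E] [Module f E] {n : ℕ} (B : Basis (Fin n) f E)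

noncomputable def tailSpace (j : ℕ) : Submodule f E :=
  ⨅ (i : Fin n) (_ : (i : ℕ) < j), LinearMap.ker (B.coord i)

def IsStrictlyLower (N : Module.End f E) : Prop :=
  ∀ j, ∀ v ∈ tailSpace B j, N v ∈ tailSpace B (j + 1)

def IsUnitriangular (g : Module.End f E) : Prop :=
  ∀ j, ∀ v ∈ tailSpace B j, g v - v ∈ tailSpace B (j + 1)

variable {B}

theorem mem_tailSpace {j : ℕ} {v : E} :
    v ∈ tailSpace B j ↔ ∀ i : Fin n, (i : ℕ) < j → B.repr v i = 0 := by
  simp [tailSpace]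

theorem mem_tailSpace_zero (v : E) : v ∈ tailSpace B 0 :=
  mem_tailSpace.2 fun _ hi => absurd hi (Nat.not_lt_zero _)

theorem tailSpace_le {j k : ℕ} (h : j ≤ k) : tailSpace B k ≤ tailSpace B j := fun _ hv =>
  mem_tailSpace.2 fun i hi => mem_tailSpace.1 hv i (hi.trans_le h)

theorem mem_tailSpace_succ {j : Fin n} {v : E} :
    v ∈ tailSpace B (j + 1) ↔ v ∈ tailSpace B j ∧ B.repr v j = 0 := by
  simp only [mem_tailSpace, Nat.lt_succ_iff_lt_or_eq, or_imp, forall_and, Fin.val_inj,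
    forall_eq]

theorem mem_tailSpace_of_le {j : ℕ} (hj : n ≤ j) {v : E} : v ∈ tailSpace B j ↔ v = 0 :=
  ⟨fun hv => B.ext_elem fun i => by simpa using mem_tailSpace.1 hv i (i.2.trans_le hj),
    fun hv => hv ▸ zero_mem _⟩

theorem repr_apply_eq_sum (N : Module.End f E) (v : E) (k : Fin n) :
    B.repr (N v) k = ∑ i, B.repr v i * B.repr (N (B i)) k := by
  conv_lhs => rw [← B.sum_repr v]
  simp only [map_sum, map_smul, Finsupp.finsetSum_apply, Finsupp.smul_apply, smul_eq_mul]

theorem isStrictlyLower_of_repr_eq_zero {N : Module.End f E}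
    (hN : ∀ i k : Fin n, k ≤ i → B.repr (N (B i)) k = 0) : IsStrictlyLower B N := by
  intro j v hv
  rw [mem_tailSpace] at hv ⊢
  intro k hk
  rw [repr_apply_eq_sum]
  refine sum_eq_zero fun i _ => ?_
  rcases lt_or_ge (i : ℕ) j with hi | hi
  · rw [hv i hi, zero_mul]
  · rw [hN i k (Fin.le_def.2 (by omega)), mul_zero]

theorem IsStrictlyLower.pow_apply_mem {N : Module.End f E} (hN : IsStrictlyLower B N) (m : ℕ)
    {j : ℕ} {v : E} (hv : v ∈ tailSpace B j) : (N ^ m) v ∈ tailSpace B (j + m) := by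
  induction m with
  | zero => simpa using hv
  | succ m ih => rw [pow_succ', Module.End.mul_apply, ← add_assoc]; exact hN _ _ ih

theorem IsStrictlyLower.pow_eq_zero {N : Module.End f E} (hN : IsStrictlyLower B N) :
    N ^ n = 0 := by
  ext v
  have := hN.pow_apply_mem n (mem_tailSpace_zero v)
  rwa [mem_tailSpace_of_le (by omega)] at this

theorem isUnitriangular_one : IsUnitriangular B 1 := fun _ _ _ => by simp

theorem IsUnitriangular.apply_mem {g : Module.End f E} (hg : IsUnitriangular B g) {j : ℕ}
    {v : E} (hv : v ∈ tailSpace B j) : g v ∈ tailSpace B j := by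
  simpa using add_mem (tailSpace_le j.le_succ (hg j v hv)) hv

theorem IsUnitriangular.mul {g h : Module.End f E} (hg : IsUnitriangular B g)
    (hh : IsUnitriangular B h) : IsUnitriangular B (g * h) := by
  intro j v hv
  simpa using add_mem (hg j _ (hh.apply_mem hv)) (hh j v hv)

theorem IsStrictlyLower.isUnitriangular_truncExp [CharZero f] {N : Module.End f E}
    (hN : IsStrictlyLower B N) : IsUnitriangular B (truncExp f n N) := by
  intro j v hv
  cases n with
  | zero => exact mem_tailSpace.2 fun i => i.elim0
  | succ k =>
    simp only [truncExp, sum_range_succ', LinearMap.add_apply, LinearMap.sum_apply,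
      LinearMap.smul_apply]
    simp only [Nat.factorial_zero, Nat.cast_one, inv_one, pow_zero, one_smul,
      Module.End.one_apply, add_sub_cancel_right]
    exact sum_mem fun m _ => Submodule.smul_mem _ _ <|
      tailSpace_le (by omega : j + 1 ≤ j + (m + 1)) (hN.pow_apply_mem (m + 1) hv)

theorem repr_truncExp_smul_apply (k : ℕ) (a : f) (N : Module.End f E)
    (w : E) (i : Fin n) :
    B.repr (truncExp f k (a • N) w) i =
      ∑ m ∈ range k, ∑ j, (m.factorial : f)⁻¹ * a ^ m * B.repr ((N ^ m) (B j)) i * B.repr w j := by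
  simp only [truncExp, LinearMap.sum_apply, map_sum, Finsupp.finsetSum_apply, smul_pow,
    LinearMap.smul_apply, map_smul, Finsupp.smul_apply, smul_eq_mul]
  refine sum_congr rfl fun m _ => ?_
  rw [repr_apply_eq_sum, mul_sum, mul_sum]
  exact sum_congr rfl fun j _ => by ring

end Flag

section Stabilizer

variable {f E : Type*} [Field f] [AddCommGroup E] [Module f E] {n : ℕ} {B : Basis (Fin n) f E}
  {g g' h : Module.End f E} {x : E}

theorem IsUnitriangular.repr_apply_sub_eq_zero (hg : IsUnitriangular B g) {j : Fin n} {v : E}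
    (hv : v ∈ tailSpace B j) : B.repr (g v - v) j = 0 :=
  (mem_tailSpace_succ.1 (hg j v hv)).2

theorem mul_apply_sub_eq (g h : Module.End f E) (x : E) :
    (g * h) x - x = (g x - x) + (h x - x) + (g (h x - x) - (h x - x)) := by
  simp only [Module.End.mul_apply, map_sub]
  abel

theorem IsUnitriangular.mul_apply_sub_mem (hg : IsUnitriangular B g) {j : ℕ}
    (hgx : g x - x ∈ tailSpace B j) (hhx : h x - x ∈ tailSpace B j) :
    (g * h) x - x ∈ tailSpace B j := by
  rw [mul_apply_sub_eq]
  exact add_mem (add_mem hgx hhx) (tailSpace_le j.le_succ (hg j _ hhx))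

theorem IsUnitriangular.repr_mul_apply_sub (hg : IsUnitriangular B g) {j : Fin n}
    (hhx : h x - x ∈ tailSpace B j) :
    B.repr ((g * h) x - x) j = B.repr (g x - x) j + B.repr (h x - x) j := by
  rw [mul_apply_sub_eq, map_add, Finsupp.add_apply, hg.repr_apply_sub_eq_zero hhx, map_add,
    Finsupp.add_apply, add_zero]

theorem apply_sub_eq_of_mul_eq_one (hg : g' * g = 1) (x : E) :
    g' x - x = -(g x - x) - (g' (g x - x) - (g x - x)) := by
  have : g' (g x) = x := by rw [← Module.End.mul_apply, hg, Module.End.one_apply]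
  rw [map_sub, this]
  abel

theorem IsUnitriangular.apply_sub_mem_of_mul_eq_one (hg' : IsUnitriangular B g')
    (hg : g' * g = 1) {j : ℕ} (hgx : g x - x ∈ tailSpace B j) : g' x - x ∈ tailSpace B j := by
  rw [apply_sub_eq_of_mul_eq_one hg]
  exact sub_mem (neg_mem hgx) (tailSpace_le j.le_succ (hg' j _ hgx))

theorem IsUnitriangular.repr_apply_sub_of_mul_eq_one (hg' : IsUnitriangular B g')
    (hg : g' * g = 1) {j : Fin n} (hgx : g x - x ∈ tailSpace B j) :
    B.repr (g' x - x) j = -B.repr (g x - x) j := by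
  rw [apply_sub_eq_of_mul_eq_one hg, map_sub, Finsupp.sub_apply, hg'.repr_apply_sub_eq_zero hgx,
    map_neg, Finsupp.neg_apply, sub_zero]

end Stabilizer

section ExpMonoid

variable {f L E : Type*} [Field f] [AddCommGroup L] [Module f L]
  [AddCommGroup E] [Module f E] {n : ℕ} {B : Basis (Fin n) f E}
  (T : L →ₗ[f] Module.End f E)

def expMonoid (n : ℕ) : Submonoid (Module.End f E) :=
  Submonoid.closure {g | ∃ l, g = truncExp f n (T l)}

theorem truncExp_smul_mem_expMonoid (a : f) (l : L) : truncExp f n (a • T l) ∈ expMonoid T n :=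
  Submonoid.subset_closure ⟨a • l, by rw [map_smul]⟩

variable [CharZero f] {T}

theorem isUnitriangular_of_mem_expMonoid (hT : ∀ l, IsStrictlyLower B (T l))
    {g : Module.End f E} (hg : g ∈ expMonoid T n) : IsUnitriangular B g := by
  induction hg using Submonoid.closure_induction with
  | mem g hg => obtain ⟨l, rfl⟩ := hg; exact (hT l).isUnitriangular_truncExp
  | one => exact isUnitriangular_one
  | mul g h _ _ hg hh => exact hg.mul hh

theorem exists_mul_eq_one_of_mem_expMonoid (hT : ∀ l, IsStrictlyLower B (T l))
    {g : Module.End f E} (hg : g ∈ expMonoid T n) : ∃ g' ∈ expMonoid T n, g' * g = 1 := by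
  induction hg using Submonoid.closure_induction with
  | mem g hg =>
    obtain ⟨l, rfl⟩ := hg
    refine ⟨truncExp f n (-1 • T l), truncExp_smul_mem_expMonoid T _ l, ?_⟩
    simpa using truncExp_neg_smul_mul_smul (hT l).pow_eq_zero (1 : f)
  | one => exact ⟨1, one_mem _, one_mul 1⟩
  | mul g h _ _ hg hh =>
    obtain ⟨g', hg'm, hg'⟩ := hg
    obtain ⟨h', hh'm, hh'⟩ := hh
    refine ⟨h' * g', mul_mem hh'm hg'm, ?_⟩
    rw [mul_assoc, ← mul_assoc g', hg', one_mul, hh']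

end ExpMonoid

section Word

variable (L σ f : Type*) [Field f]

abbrev Word := List (L × MvPolynomial σ f)

variable {L σ f} {τ E : Type*} [AddCommGroup L] [Module f L] [AddCommGroup E] [Module f E]
  (T : L →ₗ[f] Module.End f E) (n : ℕ)

namespace Word

noncomputable def eval (W : Word L σ f) (u : σ → f) : Module.End f E :=
  (W.map fun q => truncExp f n (MvPolynomial.eval u q.2 • T q.1)).prod

noncomputable def subst (φ : σ → MvPolynomial τ f) (W : Word L σ f) : Word L τ f :=
  W.map fun q => (q.1, MvPolynomial.bind₁ φ q.2)

noncomputable def inv (W : Word L σ f) : Word L σ f :=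
  (W.map fun q => (q.1, -q.2)).reverse

variable {T n}

@[simp]
theorem eval_nil (u : σ → f) : Word.eval T n ([] : Word L σ f) u = 1 := rfl

@[simp]
theorem eval_cons (q : L × MvPolynomial σ f) (W : Word L σ f) (u : σ → f) :
    eval T n (q :: W) u = truncExp f n (MvPolynomial.eval u q.2 • T q.1) * W.eval T n u := by
  simp [eval]

@[simp]
theorem eval_append (W₁ W₂ : Word L σ f) (u : σ → f) :
    eval T n (W₁ ++ W₂) u = W₁.eval T n u * W₂.eval T n u := by
  simp [eval]

@[simp]
theorem eval_subst (φ : σ → MvPolynomial τ f) (W : Word L σ f) (u : τ → f) :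
    (W.subst φ).eval T n u = W.eval T n fun i => MvPolynomial.eval u (φ i) := by
  induction W with
  | nil => rfl
  | cons q W ih =>
    simp only [subst, List.map_cons] at ih ⊢
    rw [eval_cons, eval_cons, ih]
    congr 3
    exact MvPolynomial.eval₂Hom_bind₁ _ _ _ _

theorem eval_mem (W : Word L σ f) (u : σ → f) : W.eval T n u ∈ expMonoid T n := by
  induction W with
  | nil => exact one_mem _
  | cons q W ih => rw [eval_cons]; exact mul_mem (truncExp_smul_mem_expMonoid T _ _) ih

theorem exists_repr_eval_apply {B : Basis (Fin n) f E} (W : Word L σ f) (v : E) (i : Fin n) :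
    ∃ P : MvPolynomial σ f, ∀ u, B.repr (W.eval T n u v) i = MvPolynomial.eval u P := by
  induction W generalizing i with
  | nil => exact ⟨MvPolynomial.C (B.repr v i), fun u => by simp⟩
  | cons q W ih =>
    choose P hP using ih
    refine ⟨∑ m ∈ range n, ∑ j, MvPolynomial.C ((m.factorial : f)⁻¹ * B.repr ((T q.1 ^ m) (B j)) i)
      * q.2 ^ m * P j, fun u => ?_⟩
    simp only [eval_cons, Module.End.mul_apply, repr_truncExp_smul_apply, hP, map_sum, map_mul,
      map_pow, MvPolynomial.eval_C]
    refine sum_congr rfl fun m _ => sum_congr rfl fun j _ => by ring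

theorem exists_polynomial_repr_eval_apply {B : Basis (Fin n) f E} (V : Word L Unit f) (v : E)
    (i : Fin n) : ∃ ψ : Polynomial f, ∀ t, B.repr (V.eval T n (fun _ => t) v) i = ψ.eval t := by
  obtain ⟨P, hP⟩ := V.exists_repr_eval_apply (B := B) v i
  exact ⟨MvPolynomial.uniqueAlgEquiv f Unit P, fun t =>
    (hP _).trans (MvPolynomial.eval₂_uniqueAlgEquiv (a := fun _ => t)).symm⟩

variable [CharZero f] {B : Basis (Fin n) f E}

theorem isUnitriangular_eval (hT : ∀ l, IsStrictlyLower B (T l)) (W : Word L σ f) (u : σ → f) :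
    IsUnitriangular B (W.eval T n u) :=
  isUnitriangular_of_mem_expMonoid hT (W.eval_mem u)

theorem eval_inv_mul (hT : ∀ l, IsStrictlyLower B (T l)) (W : Word L σ f) (u : σ → f) :
    W.inv.eval T n u * W.eval T n u = 1 := by
  induction W with
  | nil => rfl
  | cons q W ih =>
    simp only [inv, List.map_cons, List.reverse_cons] at ih ⊢
    rw [eval_append, eval_cons, eval_cons, eval_nil, mul_one, mul_assoc,
      ← mul_assoc (truncExp f n (MvPolynomial.eval u (-q.2) • T q.1)), map_neg,
      truncExp_neg_smul_mul_smul (hT _).pow_eq_zero, one_mul, ih]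

theorem eval_mul_inv (hT : ∀ l, IsStrictlyLower B (T l)) (W : Word L σ f) (u : σ → f) :
    W.eval T n u * W.inv.eval T n u = 1 := by
  induction W with
  | nil => rfl
  | cons q W ih =>
    simp only [inv, List.map_cons, List.reverse_cons] at ih ⊢
    rw [eval_append, eval_cons, eval_cons, eval_nil, mul_one, mul_assoc,
      ← mul_assoc (Word.eval T n W u), ih, one_mul, map_neg,
      truncExp_smul_mul_neg_smul (hT _).pow_eq_zero]

end Word

end Word

open Polynomial

theorem natDegree_comp_X_add_C_sub_sub_lt {F : Type*} [Field F] {ψ : F[X]}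
    (hψ : 0 < ψ.natDegree) (c a : F) : (ψ.comp (X + C c) - C a - ψ).natDegree < ψ.natDegree := by
  rw [sub_right_comm, natDegree_sub_C]
  by_cases hD : ψ.comp (X + C c) - ψ = 0
  · rwa [hD, natDegree_zero]
  have hψ0 : ψ ≠ 0 := by rintro rfl; simp at hψ
  have hdeg : (ψ.comp (X + C c)).natDegree = ψ.natDegree := by
    rw [natDegree_comp, natDegree_X_add_C, mul_one]
  have hcomp0 : ψ.comp (X + C c) ≠ 0 := by rintro h; rw [h, natDegree_zero] at hdeg; omega
  refine natDegree_lt_natDegree hD ?_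
  calc (ψ.comp (X + C c) - ψ).degree < (ψ.comp (X + C c)).degree := by
        refine degree_sub_lt_left ?_ hcomp0 ?_
        · rw [degree_eq_natDegree hcomp0, degree_eq_natDegree hψ0, hdeg]
        · rw [leadingCoeff_comp (by rw [natDegree_X_add_C]; norm_num), leadingCoeff_X_add_C,
            one_pow, mul_one]
    _ = ψ.degree := by rw [degree_eq_natDegree hcomp0, degree_eq_natDegree hψ0, hdeg]

theorem eq_C_mul_X_of_eval_add_one {F : Type*} [Field F] [CharZero F] {ψ : F[X]}
    (hψ : ∀ t, ψ.eval (t + 1) = ψ.eval t + ψ.eval 1) : ψ = C (ψ.eval 1) * X := by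
  have hnat : ∀ k : ℕ, ψ.eval (k : F) = k * ψ.eval 1 := by
    intro k
    induction k with
    | zero => simpa using hψ 0
    | succ k ih => rw [Nat.cast_succ, hψ, ih]; ring
  refine eq_of_infinite_eval_eq _ _ (Set.Infinite.mono ?_ (Set.infinite_range_of_injective
    (Nat.cast_injective : Function.Injective (Nat.cast : ℕ → F))))
  rintro _ ⟨k, rfl⟩
  simp only [Set.mem_ofPred_eq, eval_mul, eval_C, eval_X]
  rw [hnat, mul_comm]

section FixingFamily

variable {f L E σ : Type*} [Field f] [AddCommGroup L] [Module f L]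
  [AddCommGroup E] [Module f E] {n : ℕ} (B : Basis (Fin n) f E) (T : L →ₗ[f] Module.End f E)
  (x : E)

def IsFixingFamily (j : ℕ) (W : Word L σ f) : Prop :=
  W.eval T n (fun _ => 0) = 1 ∧ ∀ u, W.eval T n u x - x ∈ tailSpace B j

variable {B T x}

theorem exists_word_eval_eq (hT : ∀ l, IsStrictlyLower B (T l)) {g : Module.End f E}
    (hg : g ∈ expMonoid T n) :
    ∃ (τ : Type) (W : Word L τ f) (u₀ : τ → f),
      W.eval T n (fun _ => 0) = 1 ∧ W.eval T n u₀ = g := by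
  induction hg using Submonoid.closure_induction with
  | mem g hg =>
    obtain ⟨l, rfl⟩ := hg
    exact ⟨Unit, [(l, MvPolynomial.X ())], fun _ => 1,
      by simpa using truncExp_zero_smul (f := f) (hT l).pow_eq_zero, by simp⟩
  | one => exact ⟨Empty, [], isEmptyElim, rfl, rfl⟩
  | mul g h _ _ hg hh =>
    obtain ⟨τ₁, W₁, u₁, hW₁, rfl⟩ := hg
    obtain ⟨τ₂, W₂, u₂, hW₂, rfl⟩ := hh
    refine ⟨τ₁ ⊕ τ₂, W₁.subst (MvPolynomial.X ∘ Sum.inl) ++ W₂.subst (MvPolynomial.X ∘ Sum.inr),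
      Sum.elim u₁ u₂, ?_, ?_⟩
    · simpa [hW₁] using hW₂
    · simp

variable [CharZero f]

theorem IsFixingFamily.exists_difference (hT : ∀ l, IsStrictlyLower B (T l)) {j : Fin n}
    {V : Word L Unit f} (hV : IsFixingFamily B T x j V) :
    ∃ W : Word L Unit f, IsFixingFamily B T x j W ∧ ∀ t,
      B.repr (W.eval T n (fun _ => t) x - x) j = B.repr (V.eval T n (fun _ => t + 1) x - x) j -
        B.repr (V.eval T n (fun _ => 1) x - x) j - B.repr (V.eval T n (fun _ => t) x - x) j := by
  have hunit := Word.isUnitriangular_eval hT (L := L) (σ := Unit)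
  set V₁ : Word L Unit f := V.subst fun _ => 1
  have hV₁ : ∀ u, V₁.eval T n u = V.eval T n fun _ => 1 := fun u => by simp [V₁]
  have hfix₁ : ∀ u, V₁.inv.eval T n u x - x ∈ tailSpace B j := fun u =>
    (hunit _ _).apply_sub_mem_of_mul_eq_one (Word.eval_inv_mul hT _ _) (hV₁ u ▸ hV.2 _)
  have hfix : ∀ u, V.inv.eval T n u x - x ∈ tailSpace B j := fun u =>
    (hunit _ _).apply_sub_mem_of_mul_eq_one (Word.eval_inv_mul hT _ _) (hV.2 _)
  set W : Word L Unit f := V.subst (fun _ => MvPolynomial.X () + 1) ++ V₁.inv ++ V.inv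
  have hW : ∀ u, W.eval T n u =
      V.eval T n (fun _ => u () + 1) * V₁.inv.eval T n u * V.inv.eval T n u := fun u => by
    simp [W, mul_assoc]
  refine ⟨W, ⟨?_, fun u => ?_⟩, fun t => ?_⟩
  · rw [hW, zero_add, ← hV₁ (fun _ => 0), Word.eval_mul_inv hT, one_mul]
    simpa [hV.1] using Word.eval_inv_mul hT V (fun _ => 0)
  · rw [hW]
    exact ((hunit _ _).mul (hunit _ _)).mul_apply_sub_mem
      ((hunit _ _).mul_apply_sub_mem (hV.2 _) (hfix₁ u)) (hfix u)
  · rw [hW, ((hunit _ _).mul (hunit _ _)).repr_mul_apply_sub (hfix _),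
      (hunit _ _).repr_mul_apply_sub (hfix₁ _),
      (hunit _ _).repr_apply_sub_of_mul_eq_one (Word.eval_inv_mul hT V₁ _) (hV₁ _ ▸ hV.2 _),
      (hunit _ _).repr_apply_sub_of_mul_eq_one (Word.eval_inv_mul hT V _) (hV.2 _), hV₁]
    ring

theorem IsFixingFamily.exists_linear_of_polynomial (hT : ∀ l, IsStrictlyLower B (T l))
    {j : Fin n} {V : Word L Unit f} (hV : IsFixingFamily B T x j V) {ψ : f[X]} (hψ : ψ ≠ 0)
    (hVψ : ∀ t, B.repr (V.eval T n (fun _ => t) x - x) j = ψ.eval t) :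
    ∃ V' : Word L Unit f, IsFixingFamily B T x j V' ∧
      ∀ t, B.repr (V'.eval T n (fun _ => t) x - x) j = t := by
  induction hd : ψ.natDegree using Nat.strong_induction_on generalizing V ψ with
  | _ d ih =>
  have hψ0 : ψ.eval 0 = 0 := by
    rw [← hVψ 0]
    simp [hV.1]
  rcases le_or_gt d 1 with hd1 | hd1
  · set c := ψ.coeff 1
    have hψc : ψ = C c * X := by
      have := eq_X_add_C_of_natDegree_le_one (p := ψ) (by omega)
      rwa [coeff_zero_eq_eval_zero, hψ0, C_0, add_zero] at this
    have hc : c ≠ 0 := fun hc => hψ (by rw [hψc, hc, C_0, zero_mul])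
    refine ⟨V.subst fun _ => MvPolynomial.C c⁻¹ * MvPolynomial.X (), ⟨?_, fun u => ?_⟩, fun t => ?_⟩
    · simpa using hV.1
    · rw [Word.eval_subst]; exact hV.2 _
    · simp only [Word.eval_subst, MvPolynomial.eval_mul, MvPolynomial.eval_C, MvPolynomial.eval_X]
      rw [hVψ, hψc]
      simp [hc]
  obtain ⟨W, hW, hWψ⟩ := hV.exists_difference hT
  set ψ₁ := ψ.comp (X + C 1) - C (ψ.eval 1) - ψ
  refine ih ψ₁.natDegree (hd ▸ natDegree_comp_X_add_C_sub_sub_lt (by omega) 1 _) hW ?_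
    (fun t => by rw [hWψ, hVψ, hVψ, hVψ]; simp [ψ₁, eval_comp]) rfl
  -- `ψ₁ = 0` would force `ψ = ψ(1) X`, against `2 ≤ natDegree ψ`.
  intro h0
  have hlin := eq_C_mul_X_of_eval_add_one (ψ := ψ) fun t => by
    have := congrArg (eval t) h0
    simp only [ψ₁, eval_sub, eval_comp, eval_add, eval_X, eval_C, eval_zero] at this
    linear_combination this
  have : ψ.natDegree ≤ 1 := hlin ▸ (natDegree_C_mul_le _ _).trans natDegree_X_le
  omega

theorem IsFixingFamily.exists_linear (hT : ∀ l, IsStrictlyLower B (T l)) {j : Fin n}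
    {W : Word L σ f} (hW : IsFixingFamily B T x j W) {u₁ : σ → f}
    (hu₁ : B.repr (W.eval T n u₁ x - x) j ≠ 0) :
    ∃ V : Word L Unit f, IsFixingFamily B T x j V ∧
      ∀ t, B.repr (V.eval T n (fun _ => t) x - x) j = t := by
  set V : Word L Unit f := W.subst fun i => MvPolynomial.C (u₁ i) * MvPolynomial.X ()
  have hV : ∀ t, V.eval T n (fun _ => t) = W.eval T n fun i => u₁ i * t := fun t => by simp [V]
  obtain ⟨ψ, hψ⟩ := V.exists_polynomial_repr_eval_apply (B := B) (T := T) x j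
  refine IsFixingFamily.exists_linear_of_polynomial hT (V := V) (ψ := ψ - C (B.repr x j))
    ⟨by simpa [hV] using hW.1, fun u => hV (u ()) ▸ hW.2 _⟩ (fun h0 => hu₁ ?_) fun t => ?_
  · have := hψ 1
    simp only [hV, mul_one] at this
    rw [map_sub, Finsupp.sub_apply, this, ← eval_C (a := B.repr x j) (x := 1), ← eval_sub, h0,
      eval_zero]
  · rw [map_sub, Finsupp.sub_apply, hψ, eval_sub, eval_C]

theorem IsFixingFamily.exists_succ (hT : ∀ l, IsStrictlyLower B (T l)) {j : Fin n}
    {W : Word L σ f} (hW : IsFixingFamily B T x j W) :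
    ∃ W' : Word L σ f, IsFixingFamily B T x (j + 1) W' ∧
      ∀ u, B.repr (W.eval T n u x - x) j = 0 → W'.eval T n u = W.eval T n u := by
  by_cases hzero : ∀ u, B.repr (W.eval T n u x - x) j = 0
  · exact ⟨W, ⟨hW.1, fun u => mem_tailSpace_succ.2 ⟨hW.2 u, hzero u⟩⟩, fun _ _ => rfl⟩
  push Not at hzero
  obtain ⟨u₁, hu₁⟩ := hzero
  obtain ⟨V, hV, hVχ⟩ := hW.exists_linear hT hu₁
  obtain ⟨P₀, hP₀⟩ := W.exists_repr_eval_apply (T := T) (B := B) x j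
  set P := P₀ - MvPolynomial.C (B.repr x j)
  have hP : ∀ u, B.repr (W.eval T n u x - x) j = MvPolynomial.eval u P := fun u => by
    simp [P, hP₀]
  -- Correct `W u` by `V t` with `t = -(W u x - x)_j`, which kills coordinate `j`.
  have hW' : ∀ u, (V.subst (fun _ => -P) ++ W).eval T n u =
      V.eval T n (fun _ => -B.repr (W.eval T n u x - x) j) * W.eval T n u := fun u => by
    rw [Word.eval_append, Word.eval_subst, hP]
    simp
  have hunit := Word.isUnitriangular_eval hT (L := L) (σ := Unit)
  refine ⟨V.subst (fun _ => -P) ++ W, ⟨?_, fun u => ?_⟩, fun u hu => ?_⟩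
  · rw [hW', hW.1]
    simpa using hV.1
  · rw [hW']
    refine mem_tailSpace_succ.2 ⟨(hunit _ _).mul_apply_sub_mem (hV.2 _) (hW.2 u), ?_⟩
    rw [(hunit _ _).repr_mul_apply_sub (hW.2 u), hVχ, neg_add_cancel]
  · rw [hW', hu, neg_zero, hV.1, one_mul]

theorem exists_isFixingFamily_eval_eq (hT : ∀ l, IsStrictlyLower B (T l)) (j : ℕ)
    {g : Module.End f E} (hg : g ∈ expMonoid T n) (hgx : g x - x ∈ tailSpace B j) :
    ∃ (τ : Type) (W : Word L τ f) (u₀ : τ → f), IsFixingFamily B T x j W ∧ W.eval T n u₀ = g := by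
  induction j with
  | zero =>
    obtain ⟨τ, W, u₀, hW, rfl⟩ := exists_word_eval_eq hT hg
    exact ⟨τ, W, u₀, ⟨hW, fun _ => mem_tailSpace_zero _⟩, rfl⟩
  | succ j ih =>
    obtain ⟨τ, W, u₀, hW, rfl⟩ := ih (tailSpace_le j.le_succ hgx)
    by_cases hj : j < n
    · obtain ⟨J, rfl⟩ : ∃ J : Fin n, (J : ℕ) = j := ⟨⟨j, hj⟩, rfl⟩
      obtain ⟨W', hW', hW'W⟩ := hW.exists_succ hT
      exact ⟨τ, W', u₀, hW', hW'W u₀ (mem_tailSpace_succ.1 hgx).2⟩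
    · refine ⟨τ, W, u₀, ⟨hW.1, fun u => ?_⟩, rfl⟩
      rw [mem_tailSpace_of_le (by omega : n ≤ j + 1)]
      exact (mem_tailSpace_of_le (j := j) (by omega)).1 (hW.2 u)

theorem exists_mem_expMonoid_repr_eq_zero (hT : ∀ l, IsStrictlyLower B (T l)) {j : Fin n}
    {g : Module.End f E} (hg : g ∈ expMonoid T n) (hgx : g x - x ∈ tailSpace B j)
    (hχ : B.repr (g x - x) j ≠ 0) :
    ∃ h ∈ expMonoid T n, h x - x ∈ tailSpace B j ∧ B.repr (h x) j = 0 := by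
  obtain ⟨τ, W, u₀, hW, rfl⟩ := exists_isFixingFamily_eval_eq hT j hg hgx
  obtain ⟨V, hV, hVχ⟩ := hW.exists_linear hT hχ
  refine ⟨V.eval T n fun _ => -B.repr x j, V.eval_mem _, hV.2 _, ?_⟩
  simpa using hVχ (-B.repr x j)

end FixingFamily

section ZeroPattern

variable {f E : Type*} [Field f] [AddCommGroup E] [Module f E] {n : ℕ} (B : Basis (Fin n) f E)

-- `False < True` in `Prop`, so more leading zero coordinates make the pattern smaller.
def zeroPattern (v : E) : Lex (Fin n → Prop) :=
  toLex fun i => B.repr v i ≠ 0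

theorem exists_repr_ne_of_ne {v w : E} (h : v ≠ w) :
    ∃ j, (∀ i < j, B.repr v i = B.repr w i) ∧ B.repr v j ≠ B.repr w j := by
  obtain ⟨j, hj, hmin⟩ := wellFounded_lt.has_min {j | B.repr v j ≠ B.repr w j}
    (Function.ne_iff.1 fun h' => h (B.ext_elem (congrFun h')))
  exact ⟨j, fun i hi => not_not.1 fun hne => hmin i hne hi, hj⟩

variable {B}

theorem zeroPattern_lt {v w : E} {j : Fin n} (hvw : ∀ i < j, B.repr v i = B.repr w i)
    (hv : B.repr v j = 0) (hw : B.repr w j ≠ 0) : zeroPattern B v < zeroPattern B w :=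
  ⟨j, fun i hi => by simp [zeroPattern, hvw i hi], by simp [zeroPattern, hv, hw, lt_iff_le_not_ge]⟩

end ZeroPattern

theorem precedes_and_not_of_first_ne {ι M : Type*} [LinearOrder ι] [Zero M] {p q : ι → M}
    {j : ι} (hpq : ∀ i < j, p i = q i) (hp : p j = 0) (hq : q j ≠ 0) :
    (∀ k, p k ≠ 0 → q k = 0 → ∃ i ≤ k, p i = 0 ∧ q i ≠ 0) ∧
      ¬ ∀ k, q k ≠ 0 → p k = 0 → ∃ i ≤ k, q i = 0 ∧ p i ≠ 0 := by
  refine ⟨fun k hpk hqk => ⟨j, not_lt.1 fun hkj => hpk (hpq k hkj ▸ hqk), hp, hq⟩, fun h => ?_⟩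
  obtain ⟨i, hij, hqi, hpi⟩ := h j hq hp
  rcases hij.lt_or_eq with hij | rfl
  · exact hpi (hpq i hij ▸ hqi)
  · exact hq hqi

end TriangularOrbit

open TriangularOrbit

attribute [local instance] LieRing.ofAssociativeRing

/-- Theorem 1 of the paper: for a strictly triangular representation `T`, every orbit of
the group `Γ(T)` generated by the exponentials `exp (T l)` contains a point `x` that is
minimal for the preorder `⪯` : for every `y ≠ x` on the orbit, `x ≺ y`. -/
theorem stmt10 (f L E : Type*) [Field f] [CharZero f] [LieRing L] [LieAlgebra f L]
    [AddCommGroup E] [Module f E] (n : ℕ) (B : Module.Basis (Fin n) f E)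
    (T : L →ₗ⁅f⁆ Module.End f E)
    (hT : ∀ l : L, ∀ i j : Fin n, j ≤ i → B.repr (T l (B i)) j = 0)
    (x₀ : E) :
    letI S : Set (Module.End f E) :=
      {g | ∃ l : L, g = ∑ m ∈ Finset.range n, ((m.factorial : f)⁻¹) • (T l) ^ m}
    letI O : Set E := {y | ∃ g ∈ Submonoid.closure S, y = g x₀}
    ∃ x ∈ O, ∀ y ∈ O, y ≠ x →
      ((∀ j, B.repr x j ≠ 0 → B.repr y j = 0 → ∃ i ≤ j, B.repr x i = 0 ∧ B.repr y i ≠ 0) ∧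
       ¬ (∀ j, B.repr y j ≠ 0 → B.repr x j = 0 →
            ∃ i ≤ j, B.repr y i = 0 ∧ B.repr x i ≠ 0)) := by
  have hT' : ∀ l, IsStrictlyLower B (T.toLinearMap l) := fun l =>
    isStrictlyLower_of_repr_eq_zero (hT l)
  show ∃ x ∈ {y | ∃ g ∈ expMonoid T.toLinearMap n, y = g x₀}, _
  obtain ⟨_, ⟨g₀, hg₀, rfl⟩, hmin⟩ := (InvImage.wf (zeroPattern B) wellFounded_lt).has_min
    {y | ∃ g ∈ expMonoid T.toLinearMap n, y = g x₀} ⟨x₀, 1, one_mem _, rfl⟩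
  refine ⟨g₀ x₀, ⟨g₀, hg₀, rfl⟩, ?_⟩
  rintro _ ⟨g₁, hg₁, rfl⟩ hne
  obtain ⟨j, hagree, hj⟩ := exists_repr_ne_of_ne B hne.symm
  have hxj : B.repr (g₀ x₀) j = 0 := by
    by_contra hxj
    obtain ⟨g₀', hg₀', hinv⟩ := exists_mul_eq_one_of_mem_expMonoid hT' hg₀
    have hgx : (g₁ * g₀') (g₀ x₀) = g₁ x₀ := by
      rw [Module.End.mul_apply, ← Module.End.mul_apply g₀', hinv, Module.End.one_apply]
    obtain ⟨h, hh, hhx, hhj⟩ := exists_mem_expMonoid_repr_eq_zero hT' (mul_mem hg₁ hg₀')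
      (by rw [hgx]; exact mem_tailSpace.2 fun i hi => by simp [hagree i hi])
      (by rwa [hgx, map_sub B.repr, Finsupp.sub_apply, sub_ne_zero, ne_comm])
    refine hmin _ ⟨h * g₀, mul_mem hh hg₀, rfl⟩ (zeroPattern_lt (fun i hi => ?_) hhj hxj)
    simpa [sub_eq_zero] using mem_tailSpace.1 hhx i hi
  exact precedes_and_not_of_first_ne hagree hxj (hxj ▸ hj).symm
end

section
/- Let T be a strictly triangular representation of a Lie algebra L on a finite-dimensional space E over a field of characteristic 0, with fixed ordered basis e_1, ..., e_n, and let x ∈ E. If there exist l ∈ L and an index k with x_k ≠ 0, (T(l)x)_j = 0 for all j < k, and (T(l)x)_k ≠ 0, then there exists γ in the group generated by {exp(T(m)) : m ∈ L} with γx ≺ x. -/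
attribute [local instance 100] LieRing.ofAssociativeRing

/-- Part of Theorem 2 of the paper: for a strictly triangular representation, if for some
`l` and `k` one has `x_k ≠ 0`, `(T(l)x)_j = 0` for all `j < k` and `(T(l)x)_k ≠ 0`, then
`x` is not minimal on its orbit: some `γ` in the group generated by the exponentials
satisfies `γ x ≺ x`. -/
theorem stmt16 (f L E : Type*) [Field f] [CharZero f] [LieRing L] [LieAlgebra f L]
    [AddCommGroup E] [Module f E] (n : ℕ) (B : Module.Basis (Fin n) f E)
    (T : L →ₗ⁅f⁆ Module.End f E)
    (hT : ∀ l : L, ∀ i j : Fin n, j ≤ i → B.repr (T l (B i)) j = 0)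
    (x : E) (l : L) (k : Fin n)
    (hx : B.repr x k ≠ 0)
    (h1 : ∀ j < k, B.repr (T l x) j = 0)
    (h2 : B.repr (T l x) k ≠ 0) :
    ∃ γ ∈ Submonoid.closure
        {g : Module.End f E | ∃ m : L,
          g = ∑ p ∈ Finset.range n, ((p.factorial : f)⁻¹) • (T m) ^ p},
      (∀ j, B.repr (γ x) j ≠ 0 → B.repr x j = 0 →
          ∃ i ≤ j, B.repr (γ x) i = 0 ∧ B.repr x i ≠ 0) ∧
      ¬ (∀ j, B.repr x j ≠ 0 → B.repr (γ x) j = 0 →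
          ∃ i ≤ j, B.repr x i = 0 ∧ B.repr (γ x) i ≠ 0) := by
  classical
  -- Key triangularity lemma
  have key : ∀ (m : L) (y : E) (j : Fin n), (∀ i, i < j → B.repr y i = 0) →
      ∀ j', j' ≤ j → B.repr (T m y) j' = 0 := by
    intro m y j hy j' hj'
    have hy' : T m y = ∑ i, B.repr y i • T m (B i) := by
      conv_lhs => rw [← B.sum_repr y]
      rw [map_sum]
      simp [map_smul]
    rw [hy', map_sum, Finsupp.coe_finset_sum, Finset.sum_apply]
    apply Finset.sum_eq_zero
    intro i _
    rw [map_smul, Finsupp.smul_apply, smul_eq_mul]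
    rcases le_or_gt j' i with h | h
    · rw [hT m i j' h, mul_zero]
    · rw [hy i (lt_of_lt_of_le h hj'), zero_mul]
  -- there is some index below k
  have hkpos : ∃ j : Fin n, j < k := by
    by_contra h
    push_neg at h
    exact h2 (key l x k (fun i hi => absurd hi (not_lt.mpr (h i))) k le_rfl)
  obtain ⟨j0, hj0⟩ := hkpos
  have hn2 : 2 ≤ n := by
    have : (j0 : ℕ) < (k : ℕ) := hj0
    have := k.2
    omega
  -- powers ≥ 2 vanish at coordinates ≤ k
  have hpow : ∀ p : ℕ, ∀ j' ≤ k, B.repr (((T l) ^ (p + 2)) x) j' = 0 := by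
    intro p
    induction p with
    | zero =>
      intro j' hj'
      have : ((T l) ^ 2) x = T l (T l x) := by
        rw [pow_two]; rfl
      rw [this]
      exact key l (T l x) k h1 j' hj'
    | succ q ih =>
      intro j' hj'
      have : ((T l) ^ (q + 3)) x = T l (((T l) ^ (q + 2)) x) := by
        rw [pow_succ']; rfl
      rw [this]
      exact key l _ k (fun i hi => ih i (le_of_lt hi)) j' hj'
  set c : f := B.repr (T l x) k with hc
  set t : f := -(B.repr x k) * c⁻¹ with ht
  set m : L := t • l with hm
  set γ : Module.End f E :=
    ∑ p ∈ Finset.range n, ((p.factorial : f)⁻¹) • (T m) ^ p with hγ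
  have hmem : γ ∈ Submonoid.closure
      {g : Module.End f E | ∃ m : L,
        g = ∑ p ∈ Finset.range n, ((p.factorial : f)⁻¹) • (T m) ^ p} :=
    Submonoid.subset_closure ⟨m, rfl⟩
  -- coordinate formula for γ x
  have hγx : ∀ j : Fin n, B.repr (γ x) j =
      ∑ p ∈ Finset.range n, ((p.factorial : f)⁻¹ * t ^ p) * B.repr (((T l) ^ p) x) j := by
    intro j
    rw [hγ, LinearMap.sum_apply, map_sum, Finsupp.coe_finset_sum, Finset.sum_apply]
    apply Finset.sum_congr rfl
    intro p _
    have hTm : T m = t • (T l : Module.End f E) := by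
      rw [hm]; exact T.map_smul t l
    rw [hTm, smul_pow, LinearMap.smul_apply, LinearMap.smul_apply, map_smul, map_smul,
      Finsupp.smul_apply, Finsupp.smul_apply, smul_eq_mul, smul_eq_mul]
    ring
  have hsub : ({0, 1} : Finset ℕ) ⊆ Finset.range n := by
    intro p hp
    simp only [Finset.mem_insert, Finset.mem_singleton] at hp
    rcases hp with rfl | rfl <;> simp <;> omega
  have hsum : ∀ j ≤ k, B.repr (γ x) j = B.repr x j + t * B.repr (T l x) j := by
    intro j hj
    rw [hγx j]
    rw [← Finset.sum_subset hsub]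
    · rw [Finset.sum_pair (by norm_num : (0:ℕ) ≠ 1)]
      simp [pow_one]
    · intro p hp hp'
      simp only [Finset.mem_insert, Finset.mem_singleton] at hp'
      push_neg at hp'
      obtain ⟨hp0, hp1⟩ := hp'
      obtain ⟨q, rfl⟩ : ∃ q, p = q + 2 := ⟨p - 2, by omega⟩
      rw [hpow q j hj, mul_zero]
  have claim1 : ∀ j < k, B.repr (γ x) j = B.repr x j := by
    intro j hj
    rw [hsum j (le_of_lt hj), h1 j hj, mul_zero, add_zero]
  have claim2 : B.repr (γ x) k = 0 := by
    rw [hsum k le_rfl, ht, ← hc]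
    field_simp
    ring
  refine ⟨γ, hmem, ?_, ?_⟩
  · intro j hne hz
    refine ⟨k, ?_, claim2, hx⟩
    by_contra hkj
    push_neg at hkj
    rcases lt_or_eq_of_le (le_of_lt hkj) with h | h
    · exact hne ((claim1 j hkj).trans hz)
    · exact hne (h ▸ claim2)
  · intro H
    obtain ⟨i, hik, hxi, hgi⟩ := H k hx claim2
    rcases lt_or_eq_of_le hik with h | h
    · exact hgi ((claim1 i h).trans hxi)
    · exact hgi (h ▸ claim2)
end
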